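/- arXiv:1401.3251 — 2 statements merged into one kernel-verified Lean document; each statement's English description precedes it below -/
import Mathlib

section
/- For any graph G, φ(G) ≤ χ(G)·(1 - 1/α(G)), where α(G) is the independence number of G. -/
open SimpleGraph

noncomputable def chi {W : Type*} (G : SimpleGraph W) : ℕ := G.chromaticNumber.toNat

def IsProper {W : Type*} (G : SimpleGraph W) (c : W → ℕ) : Prop :=
  ∀ ⦃u v⦄, G.Adj u v → c u ≠ c v

noncomputable def disc {W : Type*} (G : SimpleGraph W) (c : W → ℕ) (s : Finset W) : ℕ :=
  (s.image c).card - chi (G.induce (s : Set W))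

noncomputable def phiC {W : Type*} [Fintype W] (G : SimpleGraph W) (c : W → ℕ) : ℕ :=
  Finset.univ.sup (disc G c)

noncomputable def phi {W : Type*} [Fintype W] (G : SimpleGraph W) : ℕ :=
  sInf {n | ∃ c, IsProper G c ∧ phiC G c = n}

open Classical in
noncomputable def phiHatC {W : Type*} [Fintype W] (G : SimpleGraph W) (c : W → ℕ) : ℕ :=
  Finset.univ.sup (fun s : Finset W =>
    if (G.induce (s : Set W)).Connected then disc G c s else 0)

noncomputable def phiHat {W : Type*} [Fintype W] (G : SimpleGraph W) : ℕ :=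
  sInf {n | ∃ c, IsProper G c ∧ phiHatC G c = n}

open Classical in
noncomputable def indepNum' {W : Type*} [Fintype W] (G : SimpleGraph W) : ℕ :=
  Finset.univ.sup fun s : Finset W =>
    if ∀ u ∈ s, ∀ v ∈ s, ¬ G.Adj u v then s.card else 0

open Classical in
noncomputable def cliqueNum' {W : Type*} [Fintype W] (G : SimpleGraph W) : ℕ :=
  Finset.univ.sup fun s : Finset W =>
    if G.IsClique (s : Set W) then s.card else 0

/-!
Colour `G` with `χ(G)` colours. An induced subgraph `H` on `s` then sees `m ≤ χ(G)` colours, and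
`m ≤ |s| ≤ χ(H) α(G)` because the colour classes of an optimal colouring of `H` are independent
in `G`. Hence `m - χ(H) ≤ m (1 - 1/α(G)) ≤ χ(G) (1 - 1/α(G))`.
-/

section IndependenceNumber

variable {V W : Type*} [Fintype V] [Fintype W]

theorem card_le_indepNum' (G : SimpleGraph V) {t : Finset V}
    (ht : ∀ u ∈ t, ∀ v ∈ t, ¬ G.Adj u v) : t.card ≤ indepNum' G := by
  unfold indepNum'
  refine le_trans ?_ (Finset.le_sup (Finset.mem_univ t))
  rw [if_pos ht]

theorem indepNum'_le_of_embedding {G : SimpleGraph V} {H : SimpleGraph W} (f : H ↪g G) :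
    indepNum' H ≤ indepNum' G := by
  classical
  refine Finset.sup_le fun t _ => ?_
  split_ifs with ht
  · rw [← Finset.card_map f.toEmbedding]
    refine card_le_indepNum' G ?_
    simp only [Finset.mem_map]
    rintro _ ⟨u, hu, rfl⟩ _ ⟨v, hv, rfl⟩
    exact fun hadj => ht u hu v hv (f.map_adj_iff.mp hadj)
  · exact Nat.zero_le _

theorem card_le_mul_indepNum'_of_coloring {α : Type*} [Fintype α] {G : SimpleGraph V}
    (C : G.Coloring α) : Fintype.card V ≤ indepNum' G * Fintype.card α := by
  classical
  refine Finset.card_le_mul_card_image_of_maps_to (f := C) (fun _ _ => Finset.mem_univ _) _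
    fun i _ => card_le_indepNum' G ?_
  simp only [Finset.mem_filter, Finset.mem_univ, true_and]
  rintro u rfl v hv hadj
  exact C.valid hadj hv.symm

theorem card_le_chi_mul_indepNum' (G : SimpleGraph V) :
    Fintype.card V ≤ chi G * indepNum' G := by
  obtain ⟨C⟩ := G.colorable_chromaticNumber_of_fintype
  simpa [chi, mul_comm] using card_le_mul_indepNum'_of_coloring C

theorem card_le_chi_induce_mul_indepNum' (G : SimpleGraph V) (s : Finset V) :
    s.card ≤ chi (G.induce (s : Set V)) * indepNum' G := by
  calc s.card = Fintype.card (s : Set V) := by simp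
    _ ≤ chi (G.induce (s : Set V)) * indepNum' (G.induce (s : Set V)) :=
      card_le_chi_mul_indepNum' _
    _ ≤ chi (G.induce (s : Set V)) * indepNum' G :=
      Nat.mul_le_mul_left _ (indepNum'_le_of_embedding (Embedding.induce _))

end IndependenceNumber

theorem natCast_sub_le_mul_one_sub_one_div {a b k α : ℕ} (hak : a ≤ k) (haα : a ≤ b * α) :
    ((a - b : ℕ) : ℝ) ≤ k * (1 - 1 / α) := by
  rcases Nat.eq_zero_or_pos α with rfl | hα
  · simp_all
  have hinv : 1 / (α : ℝ) ≤ 1 := div_le_one_of_le₀ (by exact_mod_cast hα) (by positivity)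
  rcases le_total a b with hab | hba
  · rw [Nat.sub_eq_zero_of_le hab, Nat.cast_zero]
    exact mul_nonneg (Nat.cast_nonneg k) (by linarith)
  have hb : (a : ℝ) * (1 / α) ≤ b := by
    rw [mul_one_div, div_le_iff₀ (by positivity)]
    exact_mod_cast haα
  calc ((a - b : ℕ) : ℝ) = a - b := by push_cast [hba]; rfl
    _ ≤ a * (1 - 1 / α) := by linarith
    _ ≤ k * (1 - 1 / α) := by gcongr

section Discrepancy

variable {V : Type*} {G : SimpleGraph V}

theorem isProper_coloring {k : ℕ} (C : G.Coloring (Fin k)) : IsProper G (fun v => (C v : ℕ)) :=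
  fun _ _ hadj heq => C.valid hadj (Fin.val_injective heq)

theorem phi_le_phiC [Fintype V] {c : V → ℕ} (hc : IsProper G c) : phi G ≤ phiC G c :=
  Nat.sInf_le ⟨c, hc, rfl⟩

theorem disc_coloring_le [Fintype V] {k : ℕ} (C : G.Coloring (Fin k)) (s : Finset V) :
    (disc G (fun v => (C v : ℕ)) s : ℝ) ≤ k * (1 - 1 / indepNum' G) := by
  refine natCast_sub_le_mul_one_sub_one_div ?_
    (Finset.card_image_le.trans (card_le_chi_induce_mul_indepNum' G s))
  simpa using Finset.card_le_card (t := Finset.range k)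
    (by simp [Finset.subset_iff])

theorem phiC_coloring_le [Fintype V] {k : ℕ} (C : G.Coloring (Fin k)) :
    (phiC G (fun v => (C v : ℕ)) : ℝ) ≤ k * (1 - 1 / indepNum' G) := by
  obtain ⟨s, -, hs⟩ := Finset.exists_mem_eq_sup Finset.univ Finset.univ_nonempty
    (disc G fun v => (C v : ℕ))
  rw [phiC, hs]
  exact disc_coloring_le C s

end Discrepancy

theorem stmt6 {V : Type*} [Fintype V] (G : SimpleGraph V) :
    (phi G : ℝ) ≤ (chi G : ℝ) * (1 - 1 / (indepNum' G : ℝ)) := by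
  obtain ⟨C⟩ : G.Colorable (chi G) := G.colorable_chromaticNumber_of_fintype
  calc (phi G : ℝ) ≤ phiC G (fun v => (C v : ℕ)) := by
        exact_mod_cast phi_le_phiC (isProper_coloring C)
    _ ≤ chi G * (1 - 1 / indepNum' G) := phiC_coloring_le C
end

section
/- For any triangle-free graph G, φ(G) ≥ χ(G)/2 - 1. -/
open SimpleGraph

/-!
Take a proper colouring `c` attaining `φ(G)` and one vertex of each of its `m ≥ χ(G)` colours.
These `m` vertices induce a triangle-free graph, which is `(m / 2 + 1)`-colourable by induction:
if its vertices are pairwise adjacent there are at most two of them, and otherwise a non-adjacent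
pair can share a fresh colour. So `φ(G) ≥ m - (m / 2 + 1) ≥ χ(G) / 2 - 1`.
-/

namespace SimpleGraph

variable {V : Type*} {G : SimpleGraph V}

theorem Colorable.of_isIndepSet_of_induce_compl {I : Set V} {k : ℕ} (hI : G.IsIndepSet I)
    (h : (G.induce Iᶜ).Colorable k) : G.Colorable (k + 1) := by
  classical
  obtain ⟨C⟩ := h
  let D : G.Coloring (Option (Fin k)) :=
    Coloring.mk (fun w => if hw : w ∈ I then none else some (C ⟨w, hw⟩)) fun {u v} huv => by
      by_cases hu : u ∈ I <;> by_cases hv : v ∈ I <;> simp only [hu, hv, dite_true, dite_false]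
      · exact (hI hu hv (G.ne_of_adj huv) huv).elim
      · exact (Option.some_ne_none _).symm
      · exact Option.some_ne_none _
      · exact fun hC => C.valid (show (G.induce Iᶜ).Adj ⟨u, hu⟩ ⟨v, hv⟩ from huv)
          (Option.some_injective _ hC)
  simpa using D.colorable

theorem CliqueFree.card_lt_of_pairwise_adj [Fintype V] {n : ℕ} (hG : G.CliqueFree n)
    (hadj : Pairwise G.Adj) : Fintype.card V < n := by
  obtain rfl : G = ⊤ := by
    ext u v
    exact ⟨G.ne_of_adj, fun h => hadj h⟩
  by_contra! h
  exact (IsContained.refl _).not_cliqueFree_card (hG.mono h)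

theorem CliqueFree.colorable_card_div_two_add_one [Fintype V] (hG : G.CliqueFree 3) :
    G.Colorable (Fintype.card V / 2 + 1) := by
  classical
  induction hn : Fintype.card V using Nat.strong_induction_on generalizing V with
  | _ n ih =>
  by_cases hadj : Pairwise G.Adj
  · have := hG.card_lt_of_pairwise_adj hadj
    exact (colorable_of_fintype G).mono (by omega)
  obtain ⟨u, v, huv, hnadj⟩ : ∃ u v, u ≠ v ∧ ¬G.Adj u v := by simpa [Pairwise] using hadj
  have hI : G.IsIndepSet {u, v} := Set.pairwise_pair.mpr fun _ => ⟨hnadj, fun h => hnadj h.symm⟩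
  have hcard : Fintype.card ↥({u, v} : Set V)ᶜ = n - 2 := by
    rw [Fintype.card_compl_set, ← hn, Set.card_insert _ (by simpa using huv), Set.card_singleton]
  have htwo : 2 ≤ n := hn ▸ Fintype.one_lt_card_iff.mpr ⟨u, v, huv⟩
  have hcol := ih (n - 2) (by omega) (hG.comap (Embedding.induce _).isContained) hcard
  exact (hcol.of_isIndepSet_of_induce_compl hI).mono (by omega)

end SimpleGraph

section

open Finset

variable {V : Type*} {G : SimpleGraph V}

theorem chi_le_of_colorable {n : ℕ} (h : G.Colorable n) : chi G ≤ n :=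
  ENat.toNat_le_of_le_natCast h.chromaticNumber_le

theorem isProper_of_injective {c : V → ℕ} (hc : Function.Injective c) : IsProper G c :=
  fun _ _ huv hcuv => G.ne_of_adj huv (hc hcuv)

theorem IsProper.chi_le_card_image [Fintype V] [DecidableEq V] {c : V → ℕ} (hc : IsProper G c) :
    chi G ≤ #(univ.image c) := by
  let C : G.Coloring (univ.image c) :=
    Coloring.mk (fun v => ⟨c v, mem_image_of_mem c (mem_univ v)⟩)
      fun huv h => hc huv (congrArg Subtype.val h)
  simpa using chi_le_of_colorable C.colorable

theorem exists_isProper_phiC_eq_phi [Fintype V] (G : SimpleGraph V) :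
    ∃ c, IsProper G c ∧ phiC G c = phi G :=
  Nat.sInf_mem (s := {n | ∃ c, IsProper G c ∧ phiC G c = n})
    ⟨_, _, isProper_of_injective (Fin.val_injective.comp (Fintype.equivFin V).injective), rfl⟩

theorem card_image_le_two_mul_phiC_add_two [Fintype V] [DecidableEq V] (hG : G.CliqueFree 3)
    (c : V → ℕ) : #(univ.image c) ≤ 2 * phiC G c + 2 := by
  obtain ⟨R, -, hinj, himage⟩ :=
    exists_subset_injOn_image_eq_of_surjOn Set.univ (univ.image c) fun a ha => by simpa using ha
  have hR : Fintype.card (R : Set V) = #(univ.image c) := by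
    rw [← himage, card_image_of_injOn hinj]
    simp
  have hchiR : chi (G.induce R) ≤ #(univ.image c) / 2 + 1 :=
    hR ▸ chi_le_of_colorable
      (hG.comap (Embedding.induce _).isContained).colorable_card_div_two_add_one
  have hdisc : disc G c R ≤ phiC G c := le_sup (mem_univ R)
  rw [disc, himage] at hdisc
  omega

end

theorem stmt9 {V : Type*} [Fintype V] (G : SimpleGraph V) (hG : G.CliqueFree 3) :
    (chi G : ℝ) / 2 - 1 ≤ (phi G : ℝ) := by
  classical
  obtain ⟨c, hc, hphi⟩ := exists_isProper_phiC_eq_phi G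
  have h : chi G ≤ 2 * phi G + 2 :=
    hphi ▸ hc.chi_le_card_image.trans (card_image_le_two_mul_phiC_add_two hG c)
  have h' : (chi G : ℝ) ≤ 2 * phi G + 2 := by exact_mod_cast h
  linarith
end
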